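/- Let H be a complex Hilbert space and let (P n)_{n∈ℕ} be a family of continuous linear maps on H such that each P n is a self-adjoint idempotent (orthogonal projection), P m ∘ P n = 0 whenever m ≠ n, and for every x ∈ H the series ∑_{n} P n x converges to x. Let C > 0, p > 0, and let G : H →L H be a continuous linear map with G ∘ P n = P (n+1) ∘ G ∘ P n and ‖G ∘ P n‖ ≤ C·(n+1)^{-p} for every n ∈ ℕ. Then 1 − G is invertible in the ring of continuous linear endomorphisms of H and ‖(1 − G)^{-1}‖ ≤ ∑_{k=0}^∞ C^k · (k!)^{-p}. -/

import Mathlib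

/-!
Since `G` raises the degree by one, `G ^ k` maps the `n`-th graded piece into the `(n + k)`-th
with norm at most `∏ i < k, C (n + i + 1) ^ (-p) ≤ C ^ k (k !) ^ (-p)`. The images of different
pieces are orthogonal, so Pythagoras upgrades this to `‖G ^ k‖ ≤ C ^ k (k !) ^ (-p)`. These bounds
are summable by the ratio test, hence the Neumann series `∑ G ^ k` converges absolutely to
`(1 - G)⁻¹`.
-/

open scoped InnerProductSpace
open Filter

section NeumannSeries

variable {R : Type*} {x : R}

section TopologicalRing

variable [Ring R] [TopologicalSpace R] [IsTopologicalRing R] [T2Space R]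

theorem Summable.isUnit_one_sub (h : Summable (x ^ ·)) : IsUnit (1 - x) :=
  ⟨⟨1 - x, ∑' k, x ^ k, h.one_sub_mul_tsum_pow, h.tsum_pow_mul_one_sub⟩, rfl⟩

theorem Summable.inverse_one_sub (h : Summable (x ^ ·)) : Ring.inverse (1 - x) = ∑' k, x ^ k :=
  Ring.inverse_unit ⟨1 - x, ∑' k, x ^ k, h.one_sub_mul_tsum_pow, h.tsum_pow_mul_one_sub⟩

end TopologicalRing

theorem isUnit_one_sub_and_norm_inverse_le [NormedRing R] [CompleteSpace R] {b : ℕ → ℝ} (hb : Summable b)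
    (hx : ∀ k, ‖x ^ k‖ ≤ b k) :
    IsUnit (1 - x) ∧ ‖Ring.inverse (1 - x)‖ ≤ ∑' k, b k := by
  have hsum : Summable (x ^ ·) := .of_norm_bounded hb hx
  exact ⟨hsum.isUnit_one_sub, hsum.inverse_one_sub ▸ tsum_of_norm_bounded hb.hasSum hx⟩

end NeumannSeries

section Pythagoras

variable {𝕜 E ι : Type*} [RCLike 𝕜] [NormedAddCommGroup E] [InnerProductSpace 𝕜 E] {y : ι → E}

theorem norm_sum_sq_of_pairwise_inner_eq_zero (hy : Pairwise fun i j ↦ ⟪y i, y j⟫_𝕜 = 0)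
    (s : Finset ι) : ‖∑ i ∈ s, y i‖ ^ 2 = ∑ i ∈ s, ‖y i‖ ^ 2 := by
  classical
  induction s using Finset.cons_induction with
  | empty => simp
  | cons a s ha ih =>
    have hperp : ⟪y a, ∑ i ∈ s, y i⟫_𝕜 = 0 :=
      inner_sum (𝕜 := 𝕜) s y (y a) ▸
        Finset.sum_eq_zero fun i hi ↦ hy fun hai ↦ ha (hai ▸ hi)
    rw [Finset.sum_cons, Finset.sum_cons, norm_add_sq (𝕜 := 𝕜), hperp, ih]
    simp

theorem HasSum.norm_sq_of_pairwise_inner_eq_zero (hy : Pairwise fun i j ↦ ⟪y i, y j⟫_𝕜 = 0)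
    {x : E} (hx : HasSum y x) : HasSum (fun i ↦ ‖y i‖ ^ 2) (‖x‖ ^ 2) :=
  (hx.norm.pow 2).congr fun s ↦ norm_sum_sq_of_pairwise_inner_eq_zero hy s

end Pythagoras

noncomputable def decayBound (C p : ℝ) (k : ℕ) : ℝ := C ^ k * (k.factorial : ℝ) ^ (-p)

namespace decayBound

variable {C p : ℝ}

@[simp]
theorem zero : decayBound C p 0 = 1 := by simp [decayBound]

theorem succ (k : ℕ) :
    decayBound C p (k + 1) = C * ((k : ℝ) + 1) ^ (-p) * decayBound C p k := by
  have hfac : ((k + 1).factorial : ℝ) = ((k : ℝ) + 1) * k.factorial := by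
    push_cast [Nat.factorial_succ]; ring
  rw [decayBound, decayBound, hfac, Real.mul_rpow (by positivity) (by positivity), pow_succ]
  ring

theorem nonneg (hC : 0 ≤ C) (k : ℕ) : 0 ≤ decayBound C p k := by
  unfold decayBound; positivity

theorem summable (hp : 0 < p) : Summable (decayBound C p) := by
  have hratio : Tendsto (fun k : ℕ ↦ |C| * ((k : ℝ) + 1) ^ (-p)) atTop (nhds 0) := by
    simpa using ((tendsto_rpow_neg_atTop hp).comp
      (tendsto_atTop_add_const_right atTop 1 tendsto_natCast_atTop_atTop)).const_mul |C|
  refine summable_of_ratio_norm_eventually_le one_half_lt_one ?_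
  filter_upwards [hratio.eventually (ge_mem_nhds one_half_pos)] with k hk
  rw [succ, norm_mul, norm_mul, Real.norm_eq_abs C,
    Real.norm_of_nonneg (Real.rpow_nonneg (by positivity) _)]
  exact mul_le_mul_of_nonneg_right hk (norm_nonneg _)

end decayBound

structure IsOrthogonalGrading {𝕜 E ι : Type*} [RCLike 𝕜] [NormedAddCommGroup E]
    [InnerProductSpace 𝕜 E] [CompleteSpace E] (P : ι → E →L[𝕜] E) : Prop where
  isSelfAdjoint : ∀ n, IsSelfAdjoint (P n)
  comp_self : ∀ n, P n ∘L P n = P n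
  comp_of_ne : ∀ m n, m ≠ n → P m ∘L P n = 0
  hasSum : ∀ x, HasSum (fun n ↦ P n x) x

namespace IsOrthogonalGrading

variable {𝕜 E ι : Type*} [RCLike 𝕜] [NormedAddCommGroup E] [InnerProductSpace 𝕜 E]
  [CompleteSpace E] {P : ι → E →L[𝕜] E}

theorem apply_apply_self (hP : IsOrthogonalGrading P) (n : ι) (x : E) : P n (P n x) = P n x :=
  congr($(hP.comp_self n) x)

theorem inner_apply_eq_zero (hP : IsOrthogonalGrading P) {m n : ι} (hmn : m ≠ n) (x y : E) :
    ⟪P m x, P n y⟫_𝕜 = 0 := by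
  have hzero : P m (P n y) = 0 := congr($(hP.comp_of_ne m n hmn) y)
  have hsymm := (hP.isSelfAdjoint m).isSymmetric x (P n y)
  rwa [ContinuousLinearMap.coe_coe, hzero, inner_zero_right] at hsymm

theorem opNorm_le_of_apply_mem {T : E →L[𝕜] E} {σ : ι → ι} (hP : IsOrthogonalGrading P)
    (hσ : σ.Injective) (hT : ∀ n x, P (σ n) (T (P n x)) = T (P n x)) {b : ℝ} (hb : 0 ≤ b)
    (hTb : ∀ n x, ‖T (P n x)‖ ≤ b * ‖P n x‖) : ‖T‖ ≤ b := by
  refine T.opNorm_le_bound hb fun x ↦ ?_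
  have horth : Pairwise fun i j ↦ ⟪T (P i x), T (P j x)⟫_𝕜 = 0 := fun i j hij ↦ by
    dsimp only
    rw [← hT i, ← hT j]
    exact hP.inner_apply_eq_zero (hσ.ne hij) _ _
  have hTx := (T.hasSum (hP.hasSum x)).norm_sq_of_pairwise_inner_eq_zero horth
  have hx := ((hP.hasSum x).norm_sq_of_pairwise_inner_eq_zero fun i j hij ↦
    hP.inner_apply_eq_zero hij x x).mul_left (b ^ 2)
  have hsq : ‖T x‖ ^ 2 ≤ (b * ‖x‖) ^ 2 := by
    rw [mul_pow]
    refine hasSum_le (fun n ↦ ?_) hTx hx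
    rw [← mul_pow]
    exact pow_le_pow_left₀ (norm_nonneg _) (hTb n x) 2
  exact (pow_le_pow_iff_left₀ (norm_nonneg _) (by positivity) two_ne_zero).mp hsq

end IsOrthogonalGrading

section GradingRaising

variable {𝕜 E : Type*} [RCLike 𝕜] [NormedAddCommGroup E] [NormedSpace 𝕜 E]
  {P : ℕ → E →L[𝕜] E} {G : E →L[𝕜] E} {n : ℕ} {y : E}

theorem proj_apply_of_raises (hGP : ∀ n, G ∘L P n = P (n + 1) ∘L (G ∘L P n))
    (hy : P n y = y) : P (n + 1) (G y) = G y := by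
  simpa [hy] using congr($(hGP n) y).symm

theorem proj_pow_apply_of_raises (hGP : ∀ n, G ∘L P n = P (n + 1) ∘L (G ∘L P n))
    (hy : P n y = y) (k : ℕ) : P (n + k) ((G ^ k) y) = (G ^ k) y := by
  induction k with
  | zero => simpa using hy
  | succ k ih =>
    rw [pow_succ', mul_apply_eq_comp, ← add_assoc]
    exact proj_apply_of_raises hGP ih

theorem norm_pow_apply_le_decayBound (hGP : ∀ n, G ∘L P n = P (n + 1) ∘L (G ∘L P n))
    {C p : ℝ} (hC : 0 ≤ C) (hp : 0 ≤ p) (hGnorm : ∀ n, ‖G ∘L P n‖ ≤ C * ((n : ℝ) + 1) ^ (-p))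
    (hy : P n y = y) (k : ℕ) : ‖(G ^ k) y‖ ≤ decayBound C p k * ‖y‖ := by
  induction k with
  | zero => simp
  | succ k ih =>
    have hGk := proj_pow_apply_of_raises hGP hy k
    have hweight : ((n + k : ℕ) + 1 : ℝ) ^ (-p) ≤ ((k : ℝ) + 1) ^ (-p) :=
      Real.rpow_le_rpow_of_nonpos (by positivity) (by push_cast; linarith) (neg_nonpos.mpr hp)
    calc ‖(G ^ (k + 1)) y‖
        = ‖(G ∘L P (n + k)) ((G ^ k) y)‖ := by
          rw [pow_succ', mul_apply_eq_comp, ContinuousLinearMap.comp_apply, hGk]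
      _ ≤ C * ((n + k : ℕ) + 1 : ℝ) ^ (-p) * ‖(G ^ k) y‖ :=
        (ContinuousLinearMap.le_opNorm _ _).trans
          (mul_le_mul_of_nonneg_right (hGnorm _) (norm_nonneg _))
      _ ≤ C * ((k : ℝ) + 1) ^ (-p) * (decayBound C p k * ‖y‖) := by gcongr
      _ = decayBound C p (k + 1) * ‖y‖ := by rw [decayBound.succ]; ring

end GradingRaising

theorem stmt_3_general {H : Type*} [NormedAddCommGroup H] [InnerProductSpace ℂ H] [CompleteSpace H]
    (P : ℕ → H →L[ℂ] H)
    (hsa : ∀ n, IsSelfAdjoint (P n))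
    (hidem : ∀ n, P n ∘L P n = P n)
    (horth : ∀ m n, m ≠ n → P m ∘L P n = 0)
    (hsum : ∀ x : H, HasSum (fun n => P n x) x)
    (C p : ℝ) (hp : 0 < p)
    (G : H →L[ℂ] H)
    (hGP : ∀ n, G ∘L P n = P (n + 1) ∘L (G ∘L P n))
    (hGnorm : ∀ n, ‖G ∘L P n‖ ≤ C * ((n : ℝ) + 1) ^ (-p)) :
    IsUnit (1 - G) ∧
      ‖Ring.inverse (1 - G)‖ ≤ ∑' k : ℕ, C ^ k * (k.factorial : ℝ) ^ (-p) := by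
  have hC : 0 ≤ C := by simpa using (norm_nonneg _).trans (hGnorm 0)
  have hP : IsOrthogonalGrading P := ⟨hsa, hidem, horth, hsum⟩
  have hGk (k : ℕ) : ‖G ^ k‖ ≤ decayBound C p k :=
    hP.opNorm_le_of_apply_mem (add_left_injective k)
      (fun n x ↦ proj_pow_apply_of_raises hGP (hP.apply_apply_self n x) k)
      (decayBound.nonneg hC k)
      (fun n x ↦ norm_pow_apply_le_decayBound hGP hC hp.le hGnorm (hP.apply_apply_self n x) k)
  exact isUnit_one_sub_and_norm_inverse_le (decayBound.summable hp) hGk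

/-- If `(P n)` is a family of orthogonal projections on a complex Hilbert space `H` with
mutually orthogonal ranges summing up to the identity, and `G` is a bounded operator raising
the grading by one with `‖G ∘ P n‖ ≤ C (n+1)^(-p)`, then `1 - G` is invertible and
`‖(1-G)⁻¹‖ ≤ ∑ₖ C^k (k!)^(-p)`. -/
theorem stmt_3 {H : Type*} [NormedAddCommGroup H] [InnerProductSpace ℂ H] [CompleteSpace H]
    (P : ℕ → H →L[ℂ] H)
    (hsa : ∀ n, IsSelfAdjoint (P n))
    (hidem : ∀ n, P n ∘L P n = P n)
    (horth : ∀ m n, m ≠ n → P m ∘L P n = 0)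
    (hsum : ∀ x : H, HasSum (fun n => P n x) x)
    (C p : ℝ) (hC : 0 < C) (hp : 0 < p)
    (G : H →L[ℂ] H)
    (hGP : ∀ n, G ∘L P n = P (n + 1) ∘L (G ∘L P n))
    (hGnorm : ∀ n, ‖G ∘L P n‖ ≤ C * ((n : ℝ) + 1) ^ (-p)) :
    IsUnit (1 - G) ∧
      ‖Ring.inverse (1 - G)‖ ≤ ∑' k : ℕ, C ^ k * (k.factorial : ℝ) ^ (-p) :=
  stmt_3_general P hsa hidem horth hsum C p hp G hGP hGnorm
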